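/- Let T = (V, A) be a polytree and I⁰, Iᵗ independent sets with |I⁰| = |Iᵗ| such that I⁰ is reconfigurable into Iᵗ. Define B as the set of arcs e = (u, v) such that w(e; I⁰, Iᵗ) = 1 and w(e'; I⁰, Iᵗ) = 0 for every arc e' ≠ e incident to u or v. Then in every reconfiguration sequence from I⁰ to Iᵗ, the set of arcs traversed by tokens that move exactly once is exactly B. Moreover, for every (u, v) ∈ B, u ∈ I⁰ \ Iᵗ and v ∈ Iᵗ \ I⁰. -/

import Mathlib

/-!
Tokens cross an arc only forwards, and a slide along any other arc leaves the token on the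
same side of it; so `w(e; I⁰, Iᵗ)` is the number of slides along `e`. Hence `(u, v)` is
blocking iff one slide of the sequence goes along `(u, v)` and no other slide touches `u` or
`v`, i.e. iff `u` is occupied up to some step and `v` from then on. As `u` and `v` are adjacent,
independence of the intermediate sets makes this equivalent to a single token moving exactly
once, from `u` to `v`.
-/

open scoped Classical

variable {V : Type*}

/-- The underlying undirected simple graph of a digraph given by its arc relation. -/
def underlying (A : V → V → Prop) : SimpleGraph V := SimpleGraph.fromRel A

/-- A polytree: a loopless digraph without antiparallel arcs whose underlying graph is a tree. -/
def IsPolytree (A : V → V → Prop) : Prop :=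
  (∀ v, ¬ A v v) ∧ (∀ u v, A u v → ¬ A v u) ∧ (underlying A).IsTree

/-- `x` lies in the weakly connected component of `T - (a,b)` containing the tail `a`. -/
def InCminus (A : V → V → Prop) (a b x : V) : Prop :=
  ((underlying A).deleteEdges {s(a, b)}).Reachable a x

/-- `w((a,b); X, Y) = |C⁻ ∩ X| - |C⁻ ∩ Y|`. -/
noncomputable def wArc [Fintype V] [DecidableEq V] (A : V → V → Prop)
    (X Y : Finset V) (a b : V) : ℤ :=
  ((X.filter fun x => InCminus A a b x).card : ℤ) -
    ((Y.filter fun x => InCminus A a b x).card : ℤ)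

/-- Independence in the underlying undirected graph. -/
def IndepF (A : V → V → Prop) (I : Finset V) : Prop :=
  ∀ u ∈ I, ∀ v ∈ I, ¬ (underlying A).Adj u v

/-- One token-sliding step along an arc, in its direction. -/
def IsStep [DecidableEq V] (A : V → V → Prop) (I J : Finset V) : Prop :=
  ∃ u v, A u v ∧ I \ J = {u} ∧ J \ I = {v}

/-- A reconfiguration sequence of independent sets under directed token sliding. -/
def IsReconfSeq [DecidableEq V] (A : V → V → Prop) {ℓ : ℕ}
    (f : Fin (ℓ + 1) → Finset V) : Prop :=
  (∀ i, IndepF A (f i)) ∧ ∀ i : Fin ℓ, IsStep A (f i.castSucc) (f i.succ)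

/-- `I` is reconfigurable into `J` under directed token sliding. -/
def Reconfigurable [DecidableEq V] (A : V → V → Prop) (I J : Finset V) : Prop :=
  ∃ (ℓ : ℕ) (f : Fin (ℓ + 1) → Finset V),
    IsReconfSeq A f ∧ f 0 = I ∧ f (Fin.last ℓ) = J

/-- A directed path in the digraph `A`, given by its (distinct) vertices in order. -/
structure DirPath (A : V → V → Prop) where
  len : ℕ
  vtx : Fin (len + 1) → V
  inj : Function.Injective vtx
  arc : ∀ i : Fin len, A (vtx i.castSucc) (vtx i.succ)

namespace DirPath
variable {A : V → V → Prop}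
/-- The source of a directed path. -/
def src (p : DirPath A) : V := p.vtx 0
/-- The sink of a directed path. -/
def snk (p : DirPath A) : V := p.vtx (Fin.last p.len)
/-- The second vertex `s'(P)` of a directed path. -/
def sndVtx (p : DirPath A) : V := p.vtx ⟨min 1 p.len, by omega⟩
/-- The second-to-last vertex `t'(P)` of a directed path. -/
def penVtx (p : DirPath A) : V := p.vtx ⟨p.len - 1, by omega⟩
/-- `v` is a vertex of the path `p`. -/
def mem (p : DirPath A) (v : V) : Prop := ∃ i, p.vtx i = v
/-- `x` is an internal vertex of `p` (neither source nor sink). -/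
def internal (p : DirPath A) (x : V) : Prop :=
  ∃ i : Fin (p.len + 1), p.vtx i = x ∧ i ≠ 0 ∧ i ≠ Fin.last p.len
end DirPath

/-- A directed path matching from `X` to `Y`: distinct sources forming `X`,
distinct sinks forming `Y`. -/
def IsDPM [DecidableEq V] {A : V → V → Prop} {k : ℕ}
    (X Y : Finset V) (P : Fin k → DirPath A) : Prop :=
  (Function.Injective fun i => (P i).src) ∧ (Function.Injective fun i => (P i).snk) ∧
  (Finset.univ.image fun i => (P i).src) = X ∧ (Finset.univ.image fun i => (P i).snk) = Y

/-- The path-set conditions (P1)–(P4). -/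
def PathSetConds [DecidableEq V] {A : V → V → Prop} {k : ℕ}
    (X Y : Finset V) (P : Fin k → DirPath A) : Prop :=
  (∀ i, 2 ≤ (P i).len) ∧ IsDPM X Y P ∧
  (∀ i j, i ≠ j → (P i).sndVtx ≠ (P j).sndVtx) ∧
  (∀ i j, i ≠ j → (P i).penVtx ≠ (P j).penVtx)

/-- Length of the (unique, when it exists) directed path from `u` to `v`. -/
noncomputable def ddist (A : V → V → Prop) (u v : V) : ℕ :=
  sInf {n | ∃ p : DirPath A, p.src = u ∧ p.snk = v ∧ p.len = n}

/-- A biased path pair: a common internal vertex `x` with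
`dist(s(p),x) > dist(s(q),x)` and `dist(x,t(p)) > dist(x,t(q))`. -/
def BiasedPair (A : V → V → Prop) (p q : DirPath A) : Prop :=
  ∃ x, p.internal x ∧ q.internal x ∧
    ddist A q.src x < ddist A p.src x ∧ ddist A x q.snk < ddist A x p.snk

/-- A rigid token: `v ∈ X ∩ Y` and all incident arcs have `w`-value `0`. -/
def RigidTok [Fintype V] [DecidableEq V] (A : V → V → Prop) (X Y : Finset V) (v : V) : Prop :=
  v ∈ X ∧ v ∈ Y ∧ ∀ a b, A a b → (a = v ∨ b = v) → wArc A X Y a b = 0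

/-- A blocking arc: `w((u,v)) = 1` and every other arc incident to `u` or `v`
has `w`-value `0`. -/
def BlockingArc [Fintype V] [DecidableEq V] (A : V → V → Prop) (X Y : Finset V)
    (u v : V) : Prop :=
  A u v ∧ wArc A X Y u v = 1 ∧
    ∀ a b, A a b → (a, b) ≠ (u, v) → (a = u ∨ b = u ∨ a = v ∨ b = v) →
      wArc A X Y a b = 0

/-- A trajectory of a single token along a reconfiguration sequence. -/
def IsTrajectory [DecidableEq V] (A : V → V → Prop) {ℓ : ℕ}
    (f : Fin (ℓ + 1) → Finset V) (g : Fin (ℓ + 1) → V) : Prop :=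
  (∀ i, g i ∈ f i) ∧ ∀ i : Fin ℓ,
    g i.succ = g i.castSucc ∨
      (f i.castSucc \ f i.succ = {g i.castSucc} ∧ f i.succ \ f i.castSucc = {g i.succ})

/-- Number of steps of a reconfiguration sequence sliding a token from `u` to `v`. -/
noncomputable def movesAlong [DecidableEq V] {ℓ : ℕ} (f : Fin (ℓ + 1) → Finset V)
    (u v : V) : ℕ :=
  (Finset.univ.filter fun i : Fin ℓ =>
    f i.castSucc \ f i.succ = {u} ∧ f i.succ \ f i.castSucc = {v}).card

/-- Number of forward arc traversals of a walk with vertex list `l`. -/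
noncomputable def fwdCount (A : V → V → Prop) (l : List V) : ℕ :=
  (l.zip l.tail).countP fun p => decide (A p.1 p.2)

/-- Number of reverse arc traversals of a walk with vertex list `l`. -/
noncomputable def revCount (A : V → V → Prop) (l : List V) : ℕ :=
  (l.zip l.tail).countP fun p => decide (A p.2 p.1)

/-- Number of traversals of the ordered pair `(a, b)` by a walk with vertex list `l`. -/
def traverseCount [DecidableEq V] (l : List V) (a b : V) : ℕ :=
  (l.zip l.tail).count (a, b)

/-- A vertex `v` touches a directed path `p` if `N[v]` meets the vertex set of `p`. -/
def Touches (A : V → V → Prop) (v : V) (p : DirPath A) : Prop :=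
  ∃ u, p.mem u ∧ (u = v ∨ (underlying A).Adj v u)

/-- Independence in an undirected graph (for undirected token sliding). -/
def UIndep (G : SimpleGraph V) (I : Finset V) : Prop :=
  ∀ u ∈ I, ∀ v ∈ I, ¬ G.Adj u v

/-- One undirected token-sliding step along an edge. -/
def UIsStep [DecidableEq V] (G : SimpleGraph V) (I J : Finset V) : Prop :=
  ∃ u v, G.Adj u v ∧ I \ J = {u} ∧ J \ I = {v}

/-- Reconfigurability under (undirected) token sliding. -/
def UReconfigurable [DecidableEq V] (G : SimpleGraph V) (I J : Finset V) : Prop :=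
  ∃ (ℓ : ℕ) (f : Fin (ℓ + 1) → Finset V),
    (∀ i, UIndep G (f i)) ∧ (∀ i : Fin ℓ, UIsStep G (f i.castSucc) (f i.succ)) ∧
    f 0 = I ∧ f (Fin.last ℓ) = J

open Finset

theorem Fin.sum_castSucc_sub_succ {M : Type*} [AddCommGroup M] :
    ∀ {n : ℕ} (φ : Fin (n + 1) → M),
      ∑ i : Fin n, (φ i.castSucc - φ i.succ) = φ 0 - φ (Fin.last n)
  | 0, _ => by simp
  | n + 1, φ => by
    rw [Fin.sum_univ_castSucc]
    simp only [Fin.succ_castSucc, Fin.succ_last]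
    rw [Fin.sum_castSucc_sub_succ (fun i => φ i.castSucc)]
    simp only [Fin.castSucc_zero]
    abel

section Constancy
variable {α : Sort*} {ℓ : ℕ} {p : Fin (ℓ + 1) → α} {i : Fin ℓ}

theorem Fin.apply_eq_apply_castSucc_of_le (hp : ∀ j : Fin ℓ, j ≠ i → p j.succ = p j.castSucc)
    {k : Fin (ℓ + 1)} (hk : k ≤ i.castSucc) : p k = p i.castSucc := by
  induction k using Fin.reverseInduction with
  | last => exact absurd hk (not_le.2 (Fin.castSucc_lt_last i))
  | cast j ih =>
    rcases eq_or_ne j i with rfl | hji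
    · rfl
    · have hj : j < i := lt_of_le_of_ne (Fin.castSucc_le_castSucc_iff.1 hk) hji
      rw [← hp j hji, ih (Fin.succ_le_castSucc_iff.2 hj)]

theorem Fin.apply_eq_apply_succ_of_lt (hp : ∀ j : Fin ℓ, j ≠ i → p j.succ = p j.castSucc)
    {k : Fin (ℓ + 1)} (hk : i.castSucc < k) : p k = p i.succ := by
  induction k using Fin.induction with
  | zero => exact absurd hk (Fin.not_lt_zero _)
  | succ j ih =>
    rcases eq_or_ne j i with rfl | hji
    · rfl
    · have hj : i < j := lt_of_le_of_ne (Fin.castSucc_lt_succ_iff.1 hk) hji.symm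
      rw [hp j hji, ih (Fin.castSucc_lt_castSucc_iff.2 hj)]

end Constancy

theorem Finset.card_filter_sub_card_filter_of_sdiff {α : Type*} [DecidableEq α]
    {S T : Finset α} {c d : α} (hc : S \ T = {c}) (hd : T \ S = {d})
    (P : α → Prop) [DecidablePred P] :
    (#(S.filter P) : ℤ) - #(T.filter P) = (if P c then 1 else 0) - (if P d then 1 else 0) := by
  have split : ∀ {S T : Finset α} {c : α}, S \ T = {c} →
      #(S.filter P) = #(({c} : Finset α).filter P) + #((S ∩ T).filter P) := by
    intro S T c h
    rw [← h, ← card_union_of_disjoint (disjoint_filter_filter (disjoint_sdiff_inter S T)),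
      ← filter_union, sdiff_union_inter]
  rw [split hc, split hd, inter_comm T S, filter_singleton, filter_singleton]
  split_ifs <;> simp

section Polytree
variable {A : V → V → Prop}

theorem IsPolytree.adj_of_arc (hT : IsPolytree A) {a b : V} (h : A a b) :
    (underlying A).Adj a b :=
  (SimpleGraph.fromRel_adj _ _ _).2 ⟨fun hab => hT.1 a (hab ▸ h), Or.inl h⟩

theorem IsPolytree.not_inCminus_head (hT : IsPolytree A) {a b : V} (h : A a b) :
    ¬ InCminus A a b b :=
  SimpleGraph.isBridge_iff.1 <|
    SimpleGraph.isAcyclic_iff_forall_adj_isBridge.1 hT.2.2.isAcyclic (hT.adj_of_arc h)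

theorem inCminus_iff_of_adj {a b c d : V} (hcd : (underlying A).Adj c d)
    (hne : s(c, d) ≠ s(a, b)) : InCminus A a b c ↔ InCminus A a b d := by
  have hadj : ((underlying A).deleteEdges {s(a, b)}).Adj c d :=
    SimpleGraph.deleteEdges_adj.2 ⟨hcd, by simpa using hne⟩
  exact ⟨fun h => h.trans hadj.reachable, fun h => h.trans hadj.symm.reachable⟩

end Polytree

section Sliding
variable [DecidableEq V] {A : V → V → Prop} {ℓ : ℕ} {f : Fin (ℓ + 1) → Finset V}

def SlidesAt (f : Fin (ℓ + 1) → Finset V) (i : Fin ℓ) (u v : V) : Prop :=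
  f i.castSucc \ f i.succ = {u} ∧ f i.succ \ f i.castSucc = {v}

def StepFixes (f : Fin (ℓ + 1) → Finset V) (j : Fin ℓ) (x : V) : Prop :=
  x ∈ f j.succ ↔ x ∈ f j.castSucc

theorem SlidesAt.unique {i : Fin ℓ} {u v u' v' : V} (h : SlidesAt f i u v)
    (h' : SlidesAt f i u' v') : u = u' ∧ v = v' :=
  ⟨singleton_injective (h.1.symm.trans h'.1), singleton_injective (h.2.symm.trans h'.2)⟩

theorem SlidesAt.stepFixes_iff {j : Fin ℓ} {c d x : V} (h : SlidesAt f j c d) :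
    StepFixes f j x ↔ x ≠ c ∧ x ≠ d := by
  have hc : x ∈ f j.castSucc ∧ x ∉ f j.succ ↔ x = c := by
    rw [← mem_sdiff, h.1, mem_singleton]
  have hd : x ∈ f j.succ ∧ x ∉ f j.castSucc ↔ x = d := by
    rw [← mem_sdiff, h.2, mem_singleton]
  unfold StepFixes
  tauto

theorem SlidesAt.mem_sdiff {i : Fin ℓ} {u v : V} (h : SlidesAt f i u v) :
    u ∈ f i.castSucc \ f i.succ ∧ v ∈ f i.succ \ f i.castSucc :=
  ⟨h.1 ▸ mem_singleton_self u, h.2 ▸ mem_singleton_self v⟩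

theorem SlidesAt.ne {i : Fin ℓ} {u v : V} (h : SlidesAt f i u v) : u ≠ v := by
  rintro rfl
  exact (Finset.mem_sdiff.1 h.mem_sdiff.1).2 (Finset.mem_sdiff.1 h.mem_sdiff.2).1

theorem IsReconfSeq.slidesAt_iff (hf : IsReconfSeq A f) {i : Fin ℓ} {u v : V} :
    SlidesAt f i u v ↔ u ∈ f i.castSucc \ f i.succ ∧ v ∈ f i.succ \ f i.castSucc := by
  obtain ⟨c, d, -, hcd⟩ := hf.2 i
  refine ⟨SlidesAt.mem_sdiff, fun ⟨hu, hv⟩ => ?_⟩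
  rw [hcd.1, mem_singleton] at hu
  rw [hcd.2, mem_singleton] at hv
  exact hu ▸ hv ▸ hcd

theorem movesAlong_eq_card (a b : V) : movesAlong f a b = #{j | SlidesAt f j a b} := by
  rw [movesAlong]
  congr

theorem IsReconfSeq.wArc_eq_movesAlong [Fintype V] (hT : IsPolytree A) (hf : IsReconfSeq A f)
    {a b : V} (hab : A a b) : wArc A (f 0) (f (Fin.last ℓ)) a b = movesAlong f a b := by
  set φ : Fin (ℓ + 1) → ℤ := fun k => #((f k).filter (InCminus A a b))
  have step : ∀ j : Fin ℓ, φ j.castSucc - φ j.succ = if SlidesAt f j a b then 1 else 0 := by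
    intro j
    obtain ⟨c, d, hcd, hslide⟩ := hf.2 j
    rw [card_filter_sub_card_filter_of_sdiff hslide.1 hslide.2]
    by_cases h : SlidesAt f j a b
    · obtain ⟨rfl, rfl⟩ := SlidesAt.unique hslide h
      have htail : InCminus A c d c := SimpleGraph.Reachable.refl c
      rw [if_pos htail, if_neg (hT.not_inCminus_head hab), if_pos h]
      norm_num
    · have hne : s(c, d) ≠ s(a, b) := by
        intro hs
        rcases Sym2.eq_iff.1 hs with ⟨rfl, rfl⟩ | ⟨rfl, rfl⟩
        · exact h hslide
        · exact hT.2.1 _ _ hab hcd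
      rw [if_neg h, inCminus_iff_of_adj (hT.adj_of_arc hcd) hne, sub_eq_zero]
  calc wArc A (f 0) (f (Fin.last ℓ)) a b = φ 0 - φ (Fin.last ℓ) := rfl
    _ = ∑ j : Fin ℓ, (φ j.castSucc - φ j.succ) := (Fin.sum_castSucc_sub_succ φ).symm
    _ = movesAlong f a b := by
      rw [Fintype.sum_congr _ _ step, sum_boole, movesAlong_eq_card]

end Sliding

section SlidingOnce
variable [DecidableEq V] {A : V → V → Prop} {ℓ : ℕ} {f : Fin (ℓ + 1) → Finset V}
  {i : Fin ℓ} {u v : V}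

def SlidesOnlyAt (f : Fin (ℓ + 1) → Finset V) (i : Fin ℓ) (u v : V) : Prop :=
  SlidesAt f i u v ∧ ∀ j, j ≠ i → StepFixes f j u ∧ StepFixes f j v

theorem SlidesOnlyAt.mem_iff (h : SlidesOnlyAt f i u v) (k : Fin (ℓ + 1)) :
    (u ∈ f k ↔ k ≤ i.castSucc) ∧ (v ∈ f k ↔ i.castSucc < k) := by
  obtain ⟨hu, hv⟩ := h.1.mem_sdiff
  rw [mem_sdiff] at hu hv
  have hfix (x : V) (hx : ∀ j, j ≠ i → StepFixes f j x) :
      ∀ j, j ≠ i → (x ∈ f j.succ) = (x ∈ f j.castSucc) :=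
    fun j hj => propext (hx j hj)
  have hufix := hfix u fun j hj => (h.2 j hj).1
  have hvfix := hfix v fun j hj => (h.2 j hj).2
  by_cases hk : k ≤ i.castSucc
  · rw [Fin.apply_eq_apply_castSucc_of_le (p := (u ∈ f ·)) hufix hk,
      Fin.apply_eq_apply_castSucc_of_le (p := (v ∈ f ·)) hvfix hk]
    exact ⟨iff_of_true hu.1 hk, iff_of_false hv.2 (not_lt.2 hk)⟩
  · have hk' := not_le.1 hk
    rw [Fin.apply_eq_apply_succ_of_lt (p := (u ∈ f ·)) hufix hk',
      Fin.apply_eq_apply_succ_of_lt (p := (v ∈ f ·)) hvfix hk']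
    exact ⟨iff_of_false hu.2 hk, iff_of_true hv.1 hk'⟩

theorem IsReconfSeq.slidesOnlyAt_of_mem_iff (hf : IsReconfSeq A f)
    (h : ∀ k, (u ∈ f k ↔ k ≤ i.castSucc) ∧ (v ∈ f k ↔ i.castSucc < k)) :
    SlidesOnlyAt f i u v := by
  refine ⟨hf.slidesAt_iff.2 ?_, fun j hj => ?_⟩
  · simp [(h _).1, (h _).2]
  · simp only [StepFixes, (h _).1, (h _).2, Fin.succ_le_castSucc_iff,
      Fin.castSucc_le_castSucc_iff, Fin.castSucc_lt_succ_iff, Fin.castSucc_lt_castSucc_iff]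
    exact ⟨⟨le_of_lt, fun hji => lt_of_le_of_ne hji hj⟩,
      ⟨fun hij => lt_of_le_of_ne hij (Ne.symm hj), le_of_lt⟩⟩

theorem SlidesOnlyAt.mem_endpoints (h : SlidesOnlyAt f i u v) :
    u ∈ f 0 ∧ u ∉ f (Fin.last ℓ) ∧ v ∈ f (Fin.last ℓ) ∧ v ∉ f 0 := by
  simp [(h.mem_iff _).1, (h.mem_iff _).2, Fin.castSucc_lt_last]

theorem SlidesOnlyAt.eq_of_slidesAt (h : SlidesOnlyAt f i u v) {j : Fin ℓ} {a b : V}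
    (hab : SlidesAt f j a b) (hinc : a = u ∨ b = u ∨ a = v ∨ b = v) :
    j = i ∧ a = u ∧ b = v := by
  by_cases hj : j = i
  · subst hj
    exact ⟨rfl, SlidesAt.unique hab h.1⟩
  · have := h.2 j hj
    rw [hab.stepFixes_iff, hab.stepFixes_iff] at this
    tauto

theorem SlidesOnlyAt.card_slidesAt (h : SlidesOnlyAt f i u v) {a b : V}
    (hinc : a = u ∨ b = u ∨ a = v ∨ b = v) :
    #{j | SlidesAt f j a b} = if (a, b) = (u, v) then 1 else 0 := by
  split_ifs with hab
  · obtain ⟨rfl, rfl⟩ := Prod.ext_iff.1 hab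
    refine card_eq_one.2 ⟨i, eq_singleton_iff_unique_mem.2 ⟨?_, fun j hj => ?_⟩⟩
    · exact mem_filter.2 ⟨mem_univ i, h.1⟩
    · exact (h.eq_of_slidesAt (mem_filter.1 hj).2 hinc).1
  · refine card_eq_zero.2 (filter_eq_empty_iff.2 fun j _ hj => hab ?_)
    obtain ⟨-, rfl, rfl⟩ := h.eq_of_slidesAt hj hinc
    rfl

end SlidingOnce

section Trajectories
variable [DecidableEq V] {A : V → V → Prop} {ℓ : ℕ} {f : Fin (ℓ + 1) → Finset V}
  {i : Fin ℓ} {u v : V}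

theorem IsReconfSeq.blockingArc_iff [Fintype V] (hT : IsPolytree A) (hf : IsReconfSeq A f)
    (huv : A u v) : BlockingArc A (f 0) (f (Fin.last ℓ)) u v ↔ ∃ i, SlidesOnlyAt f i u v := by
  have hmoves {a b : V} (hab : A a b) :
      wArc A (f 0) (f (Fin.last ℓ)) a b = #{j | SlidesAt f j a b} := by
    rw [hf.wArc_eq_movesAlong hT hab, movesAlong_eq_card]
  constructor
  · rintro ⟨-, hw₁, hw₀⟩
    rw [hmoves huv] at hw₁
    obtain ⟨i, hi⟩ := card_eq_one.1 (by exact_mod_cast hw₁)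
    have hslides {j : Fin ℓ} : SlidesAt f j u v ↔ j = i := by
      rw [← mem_singleton, ← hi, mem_filter, and_iff_right (mem_univ j)]
    refine ⟨i, hslides.2 rfl, fun j hj => ?_⟩
    obtain ⟨c, d, hcd, hs⟩ := hf.2 j
    replace hs : SlidesAt f j c d := hs
    have hne : (c, d) ≠ (u, v) := by
      rintro ⟨⟩
      exact hj (hslides.1 hs)
    have hfree : ¬ (c = u ∨ d = u ∨ c = v ∨ d = v) := fun hinc => by
      have hzero := hw₀ c d hcd hne hinc
      rw [hmoves hcd, Nat.cast_eq_zero, card_eq_zero, filter_eq_empty_iff] at hzero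
      exact hzero (mem_univ j) hs
    rw [hs.stepFixes_iff, hs.stepFixes_iff]
    tauto
  · rintro ⟨i, h⟩
    refine ⟨huv, ?_, fun a b hab hne hinc => ?_⟩
    · rw [hmoves huv, h.card_slidesAt (Or.inl rfl), if_pos rfl, Nat.cast_one]
    · rw [hmoves hab, h.card_slidesAt hinc, if_neg hne, Nat.cast_zero]

theorem IsTrajectory.slidesOnlyAt (hf : IsReconfSeq A f) (huv : (underlying A).Adj u v)
    {g : Fin (ℓ + 1) → V} (hg : IsTrajectory A f g)
    (hone : #{j : Fin ℓ | g j.succ ≠ g j.castSucc} = 1) (hu : g i.castSucc = u)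
    (hv : g i.succ = v) : SlidesOnlyAt f i u v := by
  obtain ⟨i₀, hi₀⟩ := card_eq_one.1 hone
  have hmoved {j : Fin ℓ} : g j.succ ≠ g j.castSucc ↔ j = i₀ := by
    rw [← mem_singleton, ← hi₀, mem_filter, and_iff_right (mem_univ j)]
  obtain rfl : i = i₀ := hmoved.1 (by rw [hu, hv]; exact huv.ne.symm)
  have hfix (j : Fin ℓ) (hj : j ≠ i) : g j.succ = g j.castSucc := not_not.1 (mt hmoved.1 hj)
  refine hf.slidesOnlyAt_of_mem_iff fun k => ?_
  by_cases hk : k ≤ i.castSucc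
  · have hu' : u ∈ f k := (Fin.apply_eq_apply_castSucc_of_le hfix hk).trans hu ▸ hg.1 k
    exact ⟨iff_of_true hu' hk, iff_of_false (hf.1 k u hu' v · huv) (not_lt.2 hk)⟩
  · have hk' := not_le.1 hk
    have hv' : v ∈ f k := (Fin.apply_eq_apply_succ_of_lt hfix hk').trans hv ▸ hg.1 k
    exact ⟨iff_of_false (hf.1 k u · v hv' huv) hk, iff_of_true hv' hk'⟩

theorem SlidesOnlyAt.exists_trajectory (h : SlidesOnlyAt f i u v) :
    ∃ g : Fin (ℓ + 1) → V, IsTrajectory A f g ∧ #{j : Fin ℓ | g j.succ ≠ g j.castSucc} = 1 ∧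
      ∃ i : Fin ℓ, g i.castSucc = u ∧ g i.succ = v := by
  let g : Fin (ℓ + 1) → V := fun k => if k ≤ i.castSucc then u else v
  have hmoved (j : Fin ℓ) : g j.succ ≠ g j.castSucc ↔ j = i := by
    simp only [g, Fin.succ_le_castSucc_iff, Fin.castSucc_le_castSucc_iff]
    rcases lt_trichotomy j i with hj | rfl | hj
    · simp [hj, hj.le, hj.ne]
    · simp [h.1.ne.symm]
    · simp [not_lt.2 hj.le, not_le.2 hj, hj.ne']
  have hi : g i.castSucc = u ∧ g i.succ = v := by simp [g]
  refine ⟨g, ⟨fun k => ?_, fun j => ?_⟩, ?_, i, hi⟩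
  · by_cases hk : k ≤ i.castSucc
    · simpa [g, hk] using (h.mem_iff k).1.2 hk
    · simpa [g, hk] using (h.mem_iff k).2.2 (not_le.1 hk)
  · by_cases hj : j = i
    · subst hj
      rw [hi.1, hi.2]
      exact Or.inr h.1
    · exact Or.inl (not_not.1 (mt (hmoved j).1 hj))
  · exact card_eq_one.2 ⟨i, by ext j; simp [hmoved]⟩

end Trajectories

theorem stmt_7_general [Fintype V] [DecidableEq V] (A : V → V → Prop) (hT : IsPolytree A)
    (I0 It : Finset V)
    {ℓ : ℕ} (f : Fin (ℓ + 1) → Finset V) (hf : IsReconfSeq A f)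
    (hstart : f 0 = I0) (hend : f (Fin.last ℓ) = It) :
    (∀ u v, A u v →
      ((∃ g : Fin (ℓ + 1) → V, IsTrajectory A f g ∧
          (Finset.univ.filter fun i : Fin ℓ => g i.succ ≠ g i.castSucc).card = 1 ∧
          ∃ i : Fin ℓ, g i.castSucc = u ∧ g i.succ = v) ↔
        BlockingArc A I0 It u v)) ∧
    ∀ u v, BlockingArc A I0 It u v → u ∈ I0 ∧ u ∉ It ∧ v ∈ It ∧ v ∉ I0 := by
  subst hstart hend
  refine ⟨fun u v huv => ⟨?_, fun hB => ?_⟩, fun u v hB => ?_⟩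
  · rintro ⟨g, hg, hone, i, hu, hv⟩
    exact (hf.blockingArc_iff hT huv).2 ⟨i, hg.slidesOnlyAt hf (hT.adj_of_arc huv) hone hu hv⟩
  · obtain ⟨i, h⟩ := (hf.blockingArc_iff hT huv).1 hB
    exact SlidesOnlyAt.exists_trajectory h
  · obtain ⟨i, h⟩ := (hf.blockingArc_iff hT hB.1).1 hB
    exact SlidesOnlyAt.mem_endpoints h

/-- In every reconfiguration sequence from `I⁰` to `Iᵗ`, the arcs
traversed by tokens that move exactly once are exactly the blocking arcs `B`;
moreover each `(u,v) ∈ B` has `u ∈ I⁰ \ Iᵗ` and `v ∈ Iᵗ \ I⁰`. -/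
theorem stmt_7 [Fintype V] [DecidableEq V] (A : V → V → Prop) (hT : IsPolytree A)
    (I0 It : Finset V) (h0 : IndepF A I0) (ht : IndepF A It) (hcard : I0.card = It.card)
    {ℓ : ℕ} (f : Fin (ℓ + 1) → Finset V) (hf : IsReconfSeq A f)
    (hstart : f 0 = I0) (hend : f (Fin.last ℓ) = It) :
    (∀ u v, A u v →
      ((∃ g : Fin (ℓ + 1) → V, IsTrajectory A f g ∧
          (Finset.univ.filter fun i : Fin ℓ => g i.succ ≠ g i.castSucc).card = 1 ∧
          ∃ i : Fin ℓ, g i.castSucc = u ∧ g i.succ = v) ↔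
        BlockingArc A I0 It u v)) ∧
    ∀ u v, BlockingArc A I0 It u v → u ∈ I0 ∧ u ∉ It ∧ v ∈ It ∧ v ∉ I0 :=
  stmt_7_general A hT I0 It f hf hstart hend
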